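/- arXiv:2109.11266 — 7 statements merged into one kernel-verified Lean document; each statement's English description precedes it below -/
import Mathlib

section
/- Let γ = {x_i}_{i=0}^t be a path in ℤ^s with x_0 = 0 and x_{i+1} = x_i ± E_{v(i)}, all x_i distinct, and let w₀: ℤ^s → ℤ be a weight function. Define the path Euler characteristic eu = -min_i w₀(x_i) + rank of the reduced 0-th path lattice cohomology (the number of 'local merging events' counted appropriately). Then eu = -w₀(x₀) + Σ_{i=0}^{t-1} max{0, w₀(x_i) - w₀(x_{i+1})}. -/
open scoped Classical

/-- the Euler characteristic of the path lattice cohomology,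
computed via counting connected components of the sublevel sets of the path
(at level `n` the number of components equals #vertices − #edges), equals
`-w₀(x₀) + Σᵢ max{0, w₀(xᵢ) − w₀(xᵢ₊₁)}`. -/
theorem path_eu_formula (s t : ℕ) (x : ℕ → Fin s → ℤ) (w : (Fin s → ℤ) → ℤ)
    (hx0 : x 0 = 0)
    (hinj : ∀ i ≤ t, ∀ j ≤ t, x i = x j → i = j)
    (hstep : ∀ i < t, ∃ v : Fin s,
      x (i + 1) = x i + Pi.single v 1 ∨ x (i + 1) = x i - Pi.single v 1)
    (m M : ℤ)
    (hm : IsLeast {z : ℤ | ∃ i ≤ t, z = w (x i)} m)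
    (hM : ∀ i ≤ t, w (x i) ≤ M) :
    -m + ∑ n ∈ Finset.Icc m M,
        ((((Finset.range (t + 1)).filter (fun i => w (x i) ≤ n)).card : ℤ)
          - (((Finset.range t).filter
                (fun i => w (x i) ≤ n ∧ w (x (i + 1)) ≤ n)).card : ℤ) - 1)
      = -(w (x 0)) + ∑ i ∈ Finset.range t, max 0 (w (x i) - w (x (i + 1))) := by
  have hml : ∀ i ≤ t, m ≤ w (x i) := fun i hi => hm.2 ⟨i, hi, rfl⟩
  have hmM : m ≤ M := by
    obtain ⟨i, hi, rfl⟩ := hm.1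
    exact hM i hi
  -- key: for m ≤ a ≤ M, the number of levels n ∈ [m,M] with a ≤ n is M+1-a
  have key : ∀ a : ℤ, m ≤ a → a ≤ M →
      (∑ n ∈ Finset.Icc m M, if a ≤ n then (1 : ℤ) else 0) = M + 1 - a := by
    intro a ha haM
    rw [Finset.sum_boole]
    have : (Finset.Icc m M).filter (fun n => a ≤ n) = Finset.Icc a M := by
      ext n
      simp only [Finset.mem_filter, Finset.mem_Icc]
      omega
    rw [this, Int.card_Icc]
    omega
  -- rewrite cards as indicator sums, swap summation order
  have hV : ∀ n : ℤ, ((((Finset.range (t + 1)).filter (fun i => w (x i) ≤ n)).card : ℤ))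
      = ∑ i ∈ Finset.range (t + 1), if w (x i) ≤ n then (1 : ℤ) else 0 := by
    intro n; rw [Finset.sum_boole]
  have hE : ∀ n : ℤ, ((((Finset.range t).filter
        (fun i => w (x i) ≤ n ∧ w (x (i + 1)) ≤ n)).card : ℤ))
      = ∑ i ∈ Finset.range t, if max (w (x i)) (w (x (i + 1))) ≤ n then (1 : ℤ) else 0 := by
    intro n
    rw [Finset.sum_boole]
    congr 2
    ext i
    simp [max_le_iff]
  have hsum : ∑ n ∈ Finset.Icc m M,
        ((((Finset.range (t + 1)).filter (fun i => w (x i) ≤ n)).card : ℤ)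
          - (((Finset.range t).filter
                (fun i => w (x i) ≤ n ∧ w (x (i + 1)) ≤ n)).card : ℤ) - 1)
      = (∑ i ∈ Finset.range (t + 1), (M + 1 - w (x i)))
        - (∑ i ∈ Finset.range t, (M + 1 - max (w (x i)) (w (x (i + 1)))))
        - (M + 1 - m) := by
    simp only [hV, hE]
    rw [Finset.sum_sub_distrib, Finset.sum_sub_distrib, Finset.sum_comm, Finset.sum_comm
      (s := Finset.Icc m M)]
    congr 1
    · congr 1
      · refine Finset.sum_congr rfl fun i hi => ?_
        have hit : i ≤ t := by simpa [Nat.lt_succ_iff] using Finset.mem_range.mp hi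
        exact key _ (hml i hit) (hM i hit)
      · refine Finset.sum_congr rfl fun i hi => ?_
        have hit : i < t := Finset.mem_range.mp hi
        have h1 : m ≤ max (w (x i)) (w (x (i + 1))) :=
          le_trans (hml i hit.le) (le_max_left _ _)
        have h2 : max (w (x i)) (w (x (i + 1))) ≤ M :=
          max_le (hM i hit.le) (hM (i + 1) hit)
        exact key _ h1 h2
    · rw [Finset.sum_const, Int.card_Icc, nsmul_eq_mul, mul_one]
      omega
  rw [hsum, Finset.sum_range_succ']
  have hterm : ∀ i, max 0 (w (x i) - w (x (i + 1)))
      = max (w (x i)) (w (x (i + 1))) - w (x (i + 1)) := by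
    intro i
    rcases le_total (w (x i)) (w (x (i + 1))) with h | h
    · rw [max_eq_left (show w (x i) - w (x (i + 1)) ≤ 0 by omega), max_eq_right h]; omega
    · rw [max_eq_right (show (0:ℤ) ≤ w (x i) - w (x (i + 1)) by omega), max_eq_left h]
  have : ∑ i ∈ Finset.range t, max 0 (w (x i) - w (x (i + 1)))
      = ∑ i ∈ Finset.range t, ((M + 1 - w (x (i + 1))) - (M + 1 - max (w (x i)) (w (x (i + 1))))) := by
    refine Finset.sum_congr rfl fun i _ => ?_
    rw [hterm i]; ring
  rw [this]
  simp only [Finset.sum_sub_distrib]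
  ring
end

section
/- Let R = {l ∈ ℤ^s : 0 ≤ l ≤ c}, h increasing with h(0)=0, h° decreasing on R, and w₀(l) = h(l) + h°(l) − h°(0). For any increasing lattice path γ = {x_i}_{i=0}^t from 0 to c (x_{i+1} = x_i + E_{v(i)}), one has 0 ≤ eu(H⁰(γ,w)) ≤ h°(0) − h°(c), where eu(H⁰(γ,w)) = -w₀(0) + Σ_i max{0, w₀(x_i) − w₀(x_{i+1})}. Moreover, equality eu = h°(0) − h°(c) holds if and only if for every i the differences h(x_{i+1}) − h(x_i) and h°(x_i) − h°(x_{i+1}) are not simultaneously nonzero. -/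
/-- bounds for the path Euler characteristic, and characterization
of the equality case. -/
theorem path_eu_bounds (s : ℕ) (c : Fin s → ℤ) (hc : (fun _ => (1 : ℤ)) ≤ c)
    (h h0 : (Fin s → ℤ) → ℤ)
    (hzero : h 0 = 0)
    (hmono : ∀ (l : Fin s → ℤ) (v : Fin s), 0 ≤ l → l + Pi.single v 1 ≤ c →
      h l ≤ h (l + Pi.single v 1))
    (hdec : ∀ (l : Fin s → ℤ) (v : Fin s), 0 ≤ l → l + Pi.single v 1 ≤ c →
      h0 (l + Pi.single v 1) ≤ h0 l)
    (w : (Fin s → ℤ) → ℤ)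
    (hw : ∀ l, w l = h l + h0 l - h0 0)
    (t : ℕ) (x : ℕ → Fin s → ℤ) (v : ℕ → Fin s)
    (hx0 : x 0 = 0) (hxt : x t = c)
    (hstep : ∀ i < t, x (i + 1) = x i + Pi.single (v i) 1) :
    (0 ≤ -(w (x 0)) + ∑ i ∈ Finset.range t, max 0 (w (x i) - w (x (i + 1)))
      ∧ -(w (x 0)) + ∑ i ∈ Finset.range t, max 0 (w (x i) - w (x (i + 1)))
          ≤ h0 0 - h0 c)
    ∧ ((-(w (x 0)) + ∑ i ∈ Finset.range t, max 0 (w (x i) - w (x (i + 1)))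
          = h0 0 - h0 c)
        ↔ ∀ i < t,
            ¬(h (x (i + 1)) - h (x i) ≠ 0 ∧ h0 (x i) - h0 (x (i + 1)) ≠ 0)) := by
  have hw0 : w (x 0) = 0 := by rw [hx0, hw, hzero]; ring
  have hsingle : ∀ n : ℕ, (0 : Fin s → ℤ) ≤ Pi.single (v n) 1 := by
    intro n j
    rcases eq_or_ne j (v n) with rfl | hj
    · simp
    · simp [Pi.single_apply, hj]
  -- monotonicity of the path
  have hmono2 : ∀ j ≤ t, ∀ i ≤ j, x i ≤ x j := by
    intro j hj
    induction j with
    | zero => intro i hi; interval_cases i; exact le_refl _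
    | succ n ih =>
      intro i hi
      rcases Nat.lt_succ_iff_lt_or_eq.mp (Nat.lt_succ_of_le hi) with hlt | rfl
      · have h1 : x i ≤ x n := ih (le_of_lt (Nat.lt_of_succ_le hj)) i (Nat.lt_succ_iff.mp hlt)
        have h2 : x n ≤ x (n + 1) := by
          rw [hstep n (Nat.lt_of_succ_le hj)]
          exact le_add_of_nonneg_right (hsingle n)
        exact le_trans h1 h2
      · exact le_refl _
  have hge : ∀ i ≤ t, 0 ≤ x i := fun i hi => hx0 ▸ hmono2 i hi 0 (Nat.zero_le i)
  have hle : ∀ i ≤ t, x i ≤ c := fun i hi => hxt ▸ hmono2 t le_rfl i hi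
  have ha : ∀ i < t, 0 ≤ h (x (i + 1)) - h (x i) := by
    intro i hi
    have := hmono (x i) (v i) (hge i hi.le) (by rw [← hstep i hi]; exact hle (i + 1) hi)
    rw [← hstep i hi] at this
    omega
  have hb : ∀ i < t, 0 ≤ h0 (x i) - h0 (x (i + 1)) := by
    intro i hi
    have := hdec (x i) (v i) (hge i hi.le) (by rw [← hstep i hi]; exact hle (i + 1) hi)
    rw [← hstep i hi] at this
    omega
  have hwd : ∀ i, w (x i) - w (x (i + 1)) =
      (h0 (x i) - h0 (x (i + 1))) - (h (x (i + 1)) - h (x i)) := by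
    intro i; rw [hw, hw]; ring
  have htel : ∑ i ∈ Finset.range t, (h0 (x i) - h0 (x (i + 1))) = h0 0 - h0 c := by
    rw [Finset.sum_range_sub' (fun i => h0 (x i)), hx0, hxt]
  refine ⟨⟨?_, ?_⟩, ?_⟩
  · rw [hw0]
    have : (0 : ℤ) ≤ ∑ i ∈ Finset.range t, max 0 (w (x i) - w (x (i + 1))) :=
      Finset.sum_nonneg fun i _ => le_max_left _ _
    omega
  · rw [hw0, neg_zero, zero_add, ← htel]
    refine Finset.sum_le_sum fun i hi => ?_
    have hi' := Finset.mem_range.mp hi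
    rw [hwd i]
    have := ha i hi'
    have := hb i hi'
    rcases max_cases (0 : ℤ) ((h0 (x i) - h0 (x (i + 1))) - (h (x (i + 1)) - h (x i))) with
      ⟨he, _⟩ | ⟨he, _⟩ <;> rw [he] <;> omega
  · rw [hw0, neg_zero, zero_add, ← htel]
    rw [Finset.sum_eq_sum_iff_of_le (fun i hi => by
      have hi' := Finset.mem_range.mp hi
      rw [hwd i]
      have := ha i hi'
      have := hb i hi'
      rcases max_cases (0 : ℤ) ((h0 (x i) - h0 (x (i + 1))) - (h (x (i + 1)) - h (x i))) with
        ⟨he, _⟩ | ⟨he, _⟩ <;> rw [he] <;> omega)]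
    constructor
    · intro H i hi
      have hH := H i (Finset.mem_range.mpr hi)
      rw [hwd i] at hH
      have := ha i hi
      have := hb i hi
      rcases max_cases (0 : ℤ) ((h0 (x i) - h0 (x (i + 1))) - (h (x (i + 1)) - h (x i))) with
        ⟨he, _⟩ | ⟨he, _⟩ <;> rw [he] at hH <;> omega
    · intro H i hi
      have hi' := Finset.mem_range.mp hi
      have hH := H i hi'
      rw [hwd i]
      have := ha i hi'
      have := hb i hi'
      rcases max_cases (0 : ℤ) ((h0 (x i) - h0 (x (i + 1))) - (h (x (i + 1)) - h (x i))) with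
        ⟨he, _⟩ | ⟨he, _⟩ <;> rw [he] <;> omega
end

section
/- Suppose the pair (h, h°) on the rectangle R = [0,c] ⊂ ℤ^s satisfies the Combinatorial Duality Property: for every l with l, l+E_v ∈ R, the quantities h(l+E_v) − h(l) and h°(l) − h°(l+E_v) are not both strictly positive. Then for every increasing path γ from 0 to c, eu(H⁰(γ,w)) = h°(0) − h°(c); in particular the path Euler characteristic is independent of the chosen increasing path. -/
/-- under the Combinatorial Duality Property, the path Euler
characteristic equals `h°(0) − h°(c)` for every increasing path from `0` to
`c`; in particular it is independent of the path. -/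
theorem CDP_path_eu (s : ℕ) (c : Fin s → ℤ) (hc : (fun _ => (1 : ℤ)) ≤ c)
    (h h0 : (Fin s → ℤ) → ℤ)
    (hzero : h 0 = 0)
    (hmono : ∀ (l : Fin s → ℤ) (v : Fin s), 0 ≤ l → l + Pi.single v 1 ≤ c →
      h l ≤ h (l + Pi.single v 1))
    (hdec : ∀ (l : Fin s → ℤ) (v : Fin s), 0 ≤ l → l + Pi.single v 1 ≤ c →
      h0 (l + Pi.single v 1) ≤ h0 l)
    (hCDP : ∀ (l : Fin s → ℤ) (v : Fin s), 0 ≤ l → l + Pi.single v 1 ≤ c →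
      ¬(h l < h (l + Pi.single v 1) ∧ h0 (l + Pi.single v 1) < h0 l))
    (w : (Fin s → ℤ) → ℤ)
    (hw : ∀ l, w l = h l + h0 l - h0 0) :
    ∀ (t : ℕ) (x : ℕ → Fin s → ℤ) (v : ℕ → Fin s),
      x 0 = 0 → x t = c →
      (∀ i < t, x (i + 1) = x i + Pi.single (v i) 1) →
      -(w (x 0)) + ∑ i ∈ Finset.range t, max 0 (w (x i) - w (x (i + 1)))
        = h0 0 - h0 c := by
  intro t x v hx0 hxt hstep
  have hsingle : ∀ u : Fin s, (0 : Fin s → ℤ) ≤ Pi.single u 1 := by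
    intro u j
    rcases eq_or_ne j u with rfl | hne
    · simp
    · simp [Pi.single_apply, hne]
  -- nonnegativity along the path
  have hnn : ∀ i ≤ t, (0 : Fin s → ℤ) ≤ x i := by
    intro i hi
    induction i with
    | zero => simp [hx0]
    | succ n ih =>
      have hn : n < t := Nat.lt_of_succ_le hi
      rw [hstep n hn]
      calc (0 : Fin s → ℤ) ≤ x n := ih (Nat.le_of_lt hn)
        _ ≤ x n + Pi.single (v n) 1 := le_add_of_nonneg_right (hsingle _)
  -- monotonicity
  have hmonox : ∀ i j, i ≤ j → j ≤ t → x i ≤ x j := by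
    intro i j hij hjt
    induction j with
    | zero => simp_all
    | succ n ih =>
      rcases Nat.lt_or_ge i (n+1) with hlt | hge
      · have hn : n < t := Nat.lt_of_succ_le hjt
        rw [hstep n hn]
        calc x i ≤ x n := ih (Nat.lt_succ_iff.mp hlt) (Nat.le_of_lt hn)
          _ ≤ x n + Pi.single (v n) 1 := le_add_of_nonneg_right (hsingle _)
      · have : i = n + 1 := le_antisymm hij hge
        simp [this]
  have hle : ∀ i ≤ t, x i ≤ c := by
    intro i hi
    calc x i ≤ x t := hmonox i t hi le_rfl
      _ = c := hxt
  -- each summand equals the h0 drop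
  have hterm : ∀ i < t, max 0 (w (x i) - w (x (i+1))) = h0 (x i) - h0 (x (i+1)) := by
    intro i hi
    have h0i : (0 : Fin s → ℤ) ≤ x i := hnn i (Nat.le_of_lt hi)
    have hci : x i + Pi.single (v i) 1 ≤ c := by
      rw [← hstep i hi]; exact hle (i+1) hi
    have e : x (i+1) = x i + Pi.single (v i) 1 := hstep i hi
    have hm := hmono (x i) (v i) h0i hci
    have hd := hdec (x i) (v i) h0i hci
    have hC := hCDP (x i) (v i) h0i hci
    rw [← e] at hm hd hC
    rw [hw, hw]
    rcases lt_or_eq_of_le hm with hlt | heq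
    · have h0eq : h0 (x (i+1)) = h0 (x i) := by
        by_contra hne
        exact hC ⟨hlt, lt_of_le_of_ne hd hne⟩
      rw [h0eq]
      have : h (x i) + h0 (x i) - h0 0 - (h (x (i+1)) + h0 (x i) - h0 0) ≤ 0 := by
        linarith
      omega
    · rw [← heq]
      have : h (x i) + h0 (x i) - h0 0 - (h (x i) + h0 (x (i+1)) - h0 0)
          = h0 (x i) - h0 (x (i+1)) := by ring
      rw [this]
      exact max_eq_right (by linarith)
  rw [Finset.sum_congr rfl (fun i hi => hterm i (Finset.mem_range.mp hi)),
    Finset.sum_range_sub' (fun i => h0 (x i)), hx0, hxt, hw, hzero]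
  ring
end

section
/- Let h satisfy the stability property and let (h, h°) satisfy the Combinatorial Duality Property on R = [0,c]. Then the identity of formal power series Σ_{l≥0} Σ_{I ⊆ V} (−1)^{|I|+1} w((l,I)) t^l = Σ_{l≥0} Σ_{I ⊆ V} (−1)^{|I|+1} h(l+E_I) t^l holds, where w((l,I)) = max_{I' ⊆ I} w₀(l + E_{I'}). -/
open scoped Classical

/-- The lattice vector `E_I = Σ_{v ∈ I} E_v`. -/
def eI (s : ℕ) (I : Finset (Fin s)) : Fin s → ℤ := fun v => if v ∈ I then 1 else 0

/-- The weight of the cube `(l, I)`: the maximum of `w₀` over its vertices. -/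
def cubeW (s : ℕ) (w : (Fin s → ℤ) → ℤ) (l : Fin s → ℤ) (I : Finset (Fin s)) : ℤ :=
  I.powerset.sup' ⟨∅, Finset.empty_mem_powerset I⟩ (fun I' => w (l + eI s I'))

lemma eI_empty (s : ℕ) : eI s ∅ = 0 := by funext v; simp [eI]

lemma eI_nonneg (s : ℕ) (S : Finset (Fin s)) : (0 : Fin s → ℤ) ≤ eI s S := by
  intro v; by_cases hv : v ∈ S <;> simp [eI, hv]

lemma eI_insert (s : ℕ) (v : Fin s) (S : Finset (Fin s)) (hv : v ∉ S) :
    eI s (insert v S) = eI s S + Pi.single v 1 := by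
  funext u
  by_cases h : u = v
  · subst h; simp [eI, hv]
  · simp [eI, h, Finset.mem_insert, Pi.single_apply]

lemma eI_union (s : ℕ) (S T : Finset (Fin s)) (hST : Disjoint S T) :
    eI s (S ∪ T) = eI s S + eI s T := by
  funext u
  have hd : ¬(u ∈ S ∧ u ∈ T) := fun ⟨a, b⟩ => (Finset.disjoint_left.mp hST a b)
  by_cases hS : u ∈ S <;> by_cases hT : u ∈ T <;>
    simp [eI, hS, hT, Finset.mem_union] <;> tauto

section Aux

variable {s : ℕ} {h h0 : (Fin s → ℤ) → ℤ}

lemma hmono_set (hmono : ∀ (l : Fin s → ℤ) (v : Fin s), 0 ≤ l → h l ≤ h (l + Pi.single v 1)) :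
    ∀ (S : Finset (Fin s)) (x : Fin s → ℤ), 0 ≤ x → h x ≤ h (x + eI s S) := by
  intro S
  induction S using Finset.induction_on with
  | empty => intro x hx; simp [eI_empty]
  | @insert a S ha ih =>
      intro x hx
      rw [eI_insert s a S ha, ← add_assoc]
      exact le_trans (ih x hx)
        (hmono (x + eI s S) a (add_nonneg hx (eI_nonneg s S)))

lemma hdec_set (hdec : ∀ (l : Fin s → ℤ) (v : Fin s), 0 ≤ l → h0 (l + Pi.single v 1) ≤ h0 l) :
    ∀ (S : Finset (Fin s)) (x : Fin s → ℤ), 0 ≤ x → h0 (x + eI s S) ≤ h0 x := by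
  intro S
  induction S using Finset.induction_on with
  | empty => intro x hx; simp [eI_empty]
  | @insert a S ha ih =>
      intro x hx
      rw [eI_insert s a S ha, ← add_assoc]
      exact le_trans (hdec (x + eI s S) a (add_nonneg hx (eI_nonneg s S))) (ih x hx)

lemma jump_down
    (hmono : ∀ (l : Fin s → ℤ) (v : Fin s), 0 ≤ l → h l ≤ h (l + Pi.single v 1))
    (hstab : ∀ (l lbar : Fin s → ℤ) (v : Fin s), 0 ≤ l → 0 ≤ lbar → lbar v = 0 →
      h l = h (l + Pi.single v 1) →
      h (l + lbar) = h (l + lbar + Pi.single v 1))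
    (l : Fin s → ℤ) (hl : 0 ≤ l) (v : Fin s) (S T : Finset (Fin s))
    (hST : S ⊆ T) (hvT : v ∉ T)
    (hjump : h (l + eI s T) < h (l + eI s T + Pi.single v 1)) :
    h (l + eI s S) < h (l + eI s S + Pi.single v 1) := by
  rcases lt_or_eq_of_le (hmono (l + eI s S) v (add_nonneg hl (eI_nonneg s S))) with h' | h'
  · exact h'
  · exfalso
    have hvz : eI s (T \ S) v = 0 := by
      simp only [eI, Finset.mem_sdiff]
      have : ¬(v ∈ T ∧ v ∉ S) := fun hc => hvT hc.1
      simp [this]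
    have hkey := hstab (l + eI s S) (eI s (T \ S)) v
      (add_nonneg hl (eI_nonneg s S)) (eI_nonneg s (T \ S)) hvz h'
    have hrw : l + eI s S + eI s (T \ S) = l + eI s T := by
      rw [add_assoc, ← eI_union s S (T \ S) Finset.disjoint_sdiff,
        Finset.union_sdiff_of_subset hST]
    rw [hrw] at hkey
    exact absurd hkey (ne_of_lt hjump)

lemma cubeW_eq_general
    (hmono : ∀ (l : Fin s → ℤ) (v : Fin s), 0 ≤ l → h l ≤ h (l + Pi.single v 1))
    (hdec : ∀ (l : Fin s → ℤ) (v : Fin s), 0 ≤ l → h0 (l + Pi.single v 1) ≤ h0 l)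
    (hstab : ∀ (l lbar : Fin s → ℤ) (v : Fin s), 0 ≤ l → 0 ≤ lbar → lbar v = 0 →
      h l = h (l + Pi.single v 1) →
      h (l + lbar) = h (l + lbar + Pi.single v 1))
    (hCDP : ∀ (l : Fin s → ℤ) (v : Fin s), 0 ≤ l →
      ¬(h l < h (l + Pi.single v 1) ∧ h0 (l + Pi.single v 1) < h0 l))
    (w : (Fin s → ℤ) → ℤ)
    (hw : ∀ l, w l = h l + h0 l - h0 0)
    (l : Fin s → ℤ) (hl : 0 ≤ l) (I : Finset (Fin s)) :
    cubeW s w l I = h (l + eI s I) + (h0 l - h0 0) := by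
  unfold cubeW
  apply le_antisymm
  · apply Finset.sup'_le
    intro I' hI'
    have hsub := Finset.mem_powerset.mp hI'
    rw [hw]
    have h1 : h (l + eI s I') ≤ h (l + eI s I) := by
      have hrw : l + eI s I = l + eI s I' + eI s (I \ I') := by
        rw [add_assoc, ← eI_union s I' (I \ I') Finset.disjoint_sdiff,
          Finset.union_sdiff_of_subset hsub]
      rw [hrw]
      exact hmono_set hmono _ _ (add_nonneg hl (eI_nonneg s I'))
    have h2 : h0 (l + eI s I') ≤ h0 l := hdec_set hdec _ _ hl
    linarith
  · classical
    set T : Finset (Finset (Fin s)) :=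
      I.powerset.filter (fun J => h (l + eI s J) = h (l + eI s I)) with hT
    have hIT : I ∈ T := by simp [hT]
    obtain ⟨J, hJT, hJmin⟩ := T.exists_min_image Finset.card ⟨I, hIT⟩
    have hJspec : J ⊆ I ∧ h (l + eI s J) = h (l + eI s I) := by
      simpa [hT, Finset.mem_filter, Finset.mem_powerset] using hJT
    obtain ⟨hJI, hJh⟩ := hJspec
    have key : ∀ S, S ⊆ J → h0 (l + eI s S) = h0 l := by
      intro S
      induction S using Finset.induction_on with
      | empty => intro _; simp [eI_empty]
      | @insert v S hv ih =>
          intro hsub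
          have hvJ : v ∈ J := hsub (Finset.mem_insert_self v S)
          have hSJ : S ⊆ J := fun u hu => hsub (Finset.mem_insert_of_mem hu)
          have hSE : S ⊆ J.erase v := fun u hu =>
            Finset.mem_erase.mpr ⟨fun he => hv (he ▸ hu), hSJ hu⟩
          -- jump along v at the top of J
          have herase : l + eI s (J.erase v) + Pi.single v 1 = l + eI s J := by
            rw [add_assoc, ← eI_insert s v (J.erase v) (Finset.notMem_erase v J),
              Finset.insert_erase hvJ]
          have hjump_top : h (l + eI s (J.erase v)) <
              h (l + eI s (J.erase v) + Pi.single v 1) := by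
            rcases lt_or_eq_of_le
              (hmono (l + eI s (J.erase v)) v
                (add_nonneg hl (eI_nonneg s (J.erase v)))) with hlt | heq
            · exact hlt
            · exfalso
              have hmem : J.erase v ∈ T := by
                rw [hT, Finset.mem_filter, Finset.mem_powerset]
                exact ⟨(Finset.erase_subset v J).trans hJI, by rw [heq, herase, hJh]⟩
              have hcard := hJmin _ hmem
              have : (J.erase v).card < J.card := Finset.card_erase_lt_of_mem hvJ
              omega
          have hjumpS : h (l + eI s S) < h (l + eI s S + Pi.single v 1) :=
            jump_down hmono hstab l hl v S (J.erase v) hSE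
              (Finset.notMem_erase v J) hjump_top
          have h0eq : h0 (l + eI s S + Pi.single v 1) = h0 (l + eI s S) := by
            refine le_antisymm (hdec _ v (add_nonneg hl (eI_nonneg s S))) ?_
            by_contra hc
            exact hCDP (l + eI s S) v (add_nonneg hl (eI_nonneg s S))
              ⟨hjumpS, lt_of_not_ge hc⟩
          rw [eI_insert s v S hv, ← add_assoc, h0eq]
          exact ih hSJ
    have hJ0 := key J (subset_refl J)
    have hval : w (l + eI s J) = h (l + eI s I) + (h0 l - h0 0) := by
      rw [hw, hJh, hJ0]; ring
    calc h (l + eI s I) + (h0 l - h0 0) = w (l + eI s J) := hval.symm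
      _ ≤ _ := Finset.le_sup' (fun I' => w (l + eI s I')) (Finset.mem_powerset.mpr hJI)

end Aux

/-- under stability and CDP, the weighted-cube generating series
coincides with the series computed from `h`, coefficientwise. -/
theorem cube_weight_series_eq (s : ℕ) (h h0 : (Fin s → ℤ) → ℤ)
    (hzero : h 0 = 0)
    (hmono : ∀ (l : Fin s → ℤ) (v : Fin s), 0 ≤ l → h l ≤ h (l + Pi.single v 1))
    (hdec : ∀ (l : Fin s → ℤ) (v : Fin s), 0 ≤ l → h0 (l + Pi.single v 1) ≤ h0 l)
    (hstab : ∀ (l lbar : Fin s → ℤ) (v : Fin s), 0 ≤ l → 0 ≤ lbar → lbar v = 0 →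
      h l = h (l + Pi.single v 1) →
      h (l + lbar) = h (l + lbar + Pi.single v 1))
    (hCDP : ∀ (l : Fin s → ℤ) (v : Fin s), 0 ≤ l →
      ¬(h l < h (l + Pi.single v 1) ∧ h0 (l + Pi.single v 1) < h0 l))
    (w : (Fin s → ℤ) → ℤ)
    (hw : ∀ l, w l = h l + h0 l - h0 0) :
    ∀ l : Fin s → ℤ, 0 ≤ l →
      ∑ I ∈ (Finset.univ : Finset (Fin s)).powerset,
          (-1 : ℤ) ^ (I.card + 1) * cubeW s w l I
        = ∑ I ∈ (Finset.univ : Finset (Fin s)).powerset,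
            (-1 : ℤ) ^ (I.card + 1) * h (l + eI s I) := by
  intro l hl
  have hW : ∀ I : Finset (Fin s), cubeW s w l I = h (l + eI s I) + (h0 l - h0 0) :=
    fun I => cubeW_eq_general hmono hdec hstab hCDP w hw l hl I
  set c : ℤ := h0 l - h0 0 with hc
  have hconst : (∑ I ∈ (Finset.univ : Finset (Fin s)).powerset,
      (-1 : ℤ) ^ (I.card + 1)) * c = 0 := by
    by_cases hs : (Finset.univ : Finset (Fin s)) = ∅
    · have hsl : l = 0 := by
        funext x
        have : IsEmpty (Fin s) := Finset.univ_eq_empty_iff.mp hs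
        exact (this.false x).elim
      have : c = 0 := by rw [hc, hsl, sub_self]
      rw [this, mul_zero]
    · have : (∑ I ∈ (Finset.univ : Finset (Fin s)).powerset,
          (-1 : ℤ) ^ (I.card + 1)) = 0 := by
        have h1 : (∑ I ∈ (Finset.univ : Finset (Fin s)).powerset,
            (-1 : ℤ) ^ I.card) = 0 := by
          rw [Finset.sum_powerset_neg_one_pow_card]
          simp [hs]
        calc (∑ I ∈ (Finset.univ : Finset (Fin s)).powerset, (-1 : ℤ) ^ (I.card + 1))
            = ∑ I ∈ (Finset.univ : Finset (Fin s)).powerset, (-1) * (-1 : ℤ) ^ I.card := by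
              apply Finset.sum_congr rfl; intro I _; ring
          _ = (-1) * ∑ I ∈ (Finset.univ : Finset (Fin s)).powerset, (-1 : ℤ) ^ I.card := by
              rw [Finset.mul_sum]
          _ = 0 := by rw [h1, mul_zero]
      rw [this, zero_mul]
  calc ∑ I ∈ (Finset.univ : Finset (Fin s)).powerset,
          (-1 : ℤ) ^ (I.card + 1) * cubeW s w l I
      = ∑ I ∈ (Finset.univ : Finset (Fin s)).powerset,
          ((-1 : ℤ) ^ (I.card + 1) * h (l + eI s I) + (-1 : ℤ) ^ (I.card + 1) * c) := by
        apply Finset.sum_congr rfl; intro I _; rw [hW I]; ring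
    _ = (∑ I ∈ (Finset.univ : Finset (Fin s)).powerset,
          (-1 : ℤ) ^ (I.card + 1) * h (l + eI s I))
        + (∑ I ∈ (Finset.univ : Finset (Fin s)).powerset, (-1 : ℤ) ^ (I.card + 1)) * c := by
        rw [Finset.sum_add_distrib, Finset.sum_mul]
    _ = _ := by rw [hconst, add_zero]
end

section
/- Let w₀: ℤ^s_{≥0} → ℤ be a weight function with finite sublevel sets and suppose there exists c ∈ ℤ^s_{≥0} such that for every l ≥ 0 with some coordinate l_v > c_v one has w₀(l − E_v) ≤ w₀(l). Then for every n, the inclusion S_n ∩ [0,c] ↪ S_n (union of cubes of weight ≤ n in the first quadrant) induces an isomorphism on all cohomology groups; in fact S_n deformation retracts onto S_n ∩ [0,c]. -/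
open scoped Classical

def cube (s : ℕ) (l : Fin s → ℤ) (I : Finset (Fin s)) : Set (Fin s → ℝ) :=
  {x | ∀ v, (l v : ℝ) ≤ x v ∧ x v ≤ (l v : ℝ) + (if v ∈ I then 1 else 0)}

/-- The sublevel set `S_n` in the first quadrant: the union of all cubes
`(l, I)` with `l ≥ 0` of weight `≤ n`. -/
def SlevelPos (s : ℕ) (w : (Fin s → ℤ) → ℤ) (n : ℤ) : Set (Fin s → ℝ) :=
  ⋃ (l : Fin s → ℤ) (_ : 0 ≤ l) (I : Finset (Fin s)) (_ : cubeW s w l I ≤ n),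
    cube s l I

/-- The real rectangle `[0, c]`. -/
def box (s : ℕ) (c : Fin s → ℤ) : Set (Fin s → ℝ) :=
  {x | ∀ v, 0 ≤ x v ∧ x v ≤ (c v : ℝ)}

lemma cubeW_le_iff {s : ℕ} {w : (Fin s → ℤ) → ℤ} {l : Fin s → ℤ} {I : Finset (Fin s)}
    {n : ℤ} : cubeW s w l I ≤ n ↔ ∀ I' ⊆ I, w (l + eI s I') ≤ n := by
  unfold cubeW
  refine (Finset.sup'_le_iff ..).trans ?_
  simp [Finset.mem_powerset]

lemma mem_SlevelPos_iff {s : ℕ} {w : (Fin s → ℤ) → ℤ} {n : ℤ} {y : Fin s → ℝ} :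
    y ∈ SlevelPos s w n ↔
      ∃ l : Fin s → ℤ, 0 ≤ l ∧ ∃ I : Finset (Fin s), cubeW s w l I ≤ n ∧ y ∈ cube s l I := by
  simp [SlevelPos, Set.mem_iUnion]

lemma retract_base (s : ℕ) (w : (Fin s → ℤ) → ℤ) (c : Fin s → ℤ) (n : ℤ)
    (l : Fin s → ℤ) (I : Finset (Fin s)) (z y : Fin s → ℝ)
    (hl : 0 ≤ l) (hW : cubeW s w l I ≤ n) (hz : z ∈ cube s l I)
    (h1 : ∀ v, y v ≤ z v) (h2 : ∀ v, z v ≤ (c v : ℝ) → y v = z v)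
    (h3 : ∀ v, (c v : ℝ) < z v → (c v : ℝ) ≤ y v)
    (hstop : ∀ v, c v < l v → (l v : ℝ) ≤ y v) :
    y ∈ SlevelPos s w n := by
  rw [mem_SlevelPos_iff]
  refine ⟨l, hl, I, hW, ?_⟩
  intro v
  obtain ⟨hlo, hhi⟩ := hz v
  refine ⟨?_, le_trans (h1 v) hhi⟩
  by_cases hzc : z v ≤ (c v : ℝ)
  · rw [h2 v hzc]; exact hlo
  · push_neg at hzc
    by_cases hcl : c v < l v
    · exact hstop v hcl
    · push_neg at hcl
      calc (l v : ℝ) ≤ (c v : ℝ) := by exact_mod_cast hcl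
        _ ≤ y v := h3 v hzc

lemma retract_key (s : ℕ) (w : (Fin s → ℤ) → ℤ) (c : Fin s → ℤ) (hc : 0 ≤ c)
    (hmono : ∀ (l : Fin s → ℤ) (v : Fin s), 0 ≤ l → c v < l v →
      w (l - Pi.single v 1) ≤ w l) (n : ℤ) :
    ∀ (N : ℕ) (l : Fin s → ℤ) (I : Finset (Fin s)) (z y : Fin s → ℝ),
      (∑ v, (l v - c v).toNat) ≤ N → 0 ≤ l → cubeW s w l I ≤ n →
      z ∈ cube s l I →
      (∀ v, y v ≤ z v) → (∀ v, z v ≤ (c v : ℝ) → y v = z v) →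
      (∀ v, (c v : ℝ) < z v → (c v : ℝ) ≤ y v) →
      y ∈ SlevelPos s w n := by
  intro N
  induction N with
  | zero =>
    intro l I z y hsum hl hW hz h1 h2 h3
    refine retract_base s w c n l I z y hl hW hz h1 h2 h3 ?_
    intro v hv
    exfalso
    have h1' : 1 ≤ (l v - c v).toNat := by omega
    have h2' : (l v - c v).toNat ≤ ∑ u, (l u - c u).toNat :=
      Finset.single_le_sum (f := fun u => (l u - c u).toNat)
        (fun u _ => Nat.zero_le _) (Finset.mem_univ v)
    omega
  | succ N ih =>
    intro l I z y hsum hl hW hz h1 h2 h3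
    by_cases hex : ∃ v, c v < l v ∧ y v < (l v : ℝ)
    · obtain ⟨v, hcv, hyv⟩ := hex
      set l' : Fin s → ℤ := l - Pi.single v 1 with hl'def
      have hl'v : l' v = l v - 1 := by simp [hl'def]
      have hl'u : ∀ u, u ≠ v → l' u = l u := by
        intro u hu; simp [hl'def, Pi.single_eq_of_ne hu]
      set z' : Fin s → ℝ := Function.update z v (max (y v) ((l v : ℝ) - 1)) with hz'def
      -- c v ≤ y v
      have hclz : (c v : ℝ) < z v := by
        have := (hz v).1
        have hcast : (c v : ℝ) < (l v : ℝ) := by exact_mod_cast hcv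
        linarith
      have hycv : (c v : ℝ) ≤ y v := h3 v hclz
      -- sum decreases
      have hsum' : ∑ u, (l' u - c u).toNat ≤ N := by
        have hsplit : ∀ (f : Fin s → ℕ),
            ∑ u ∈ Finset.univ.erase v, f u + f v = ∑ u, f u :=
          fun f => Finset.sum_erase_add _ _ (Finset.mem_univ v)
        have he : ∑ u ∈ Finset.univ.erase v, (l' u - c u).toNat
            = ∑ u ∈ Finset.univ.erase v, (l u - c u).toNat := by
          refine Finset.sum_congr rfl fun u hu => ?_
          rw [hl'u u (Finset.mem_erase.mp hu).1]
        have hv1 := hsplit (fun u => (l' u - c u).toNat)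
        have hv2 := hsplit (fun u => (l u - c u).toNat)
        rw [he] at hv1
        have : (l' v - c v).toNat + 1 = (l v - c v).toNat := by rw [hl'v]; omega
        omega
      -- l' nonneg
      have hl'0 : 0 ≤ l' := by
        intro u
        by_cases hu : u = v
        · subst hu
          show (0:ℤ) ≤ l' u
          rw [hl'v]
          have h0 : (0:ℤ) ≤ c u := hc u
          omega
        · rw [hl'u u hu]; exact hl u
      -- weight bound
      have hW' : cubeW s w l' (insert v I) ≤ n := by
        rw [cubeW_le_iff] at hW ⊢
        intro I'' hI''
        by_cases hvI : v ∈ I''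
        · have heq : l' + eI s I'' = l + eI s (I''.erase v) := by
            funext u
            by_cases huv : u = v
            · subst huv
              simp [hl'def, eI, hvI, Pi.single_eq_same]
            · simp [hl'def, eI, Pi.single_eq_of_ne huv, Finset.mem_erase, huv]
          rw [heq]
          refine hW _ ?_
          intro u hu
          obtain ⟨hu1, hu2⟩ := Finset.mem_erase.mp hu
          rcases Finset.mem_insert.mp (hI'' hu2) with h | h
          · exact absurd h hu1
          · exact h
        · have hIsub : I'' ⊆ I := by
            intro u hu
            rcases Finset.mem_insert.mp (hI'' hu) with h | h
            · exact absurd (h ▸ hu) hvI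
            · exact h
          have heq : l' + eI s I'' = (l + eI s I'') - Pi.single v 1 := by
            funext u; simp [hl'def, eI]; ring
          rw [heq]
          refine le_trans (hmono _ v ?_ ?_) (hW _ hIsub)
          · intro u
            have h0 : (0:ℤ) ≤ l u := hl u
            show (0:ℤ) ≤ l u + eI s I'' u
            simp only [eI]
            split_ifs <;> omega
          · simp [eI, hvI]
            omega
      -- z' in cube
      have hz' : z' ∈ cube s l' (insert v I) := by
        intro u
        by_cases huv : u = v
        · subst huv
          constructor
          · rw [hz'def]
            simp only [Function.update_self, hl'v]
            push_cast
            exact le_max_right _ _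
          · rw [hz'def]
            simp only [Function.update_self, hl'v, Finset.mem_insert_self, if_pos]
            push_cast
            rw [max_le_iff]
            constructor <;> linarith
        · have hzu := hz u
          rw [hz'def]
          simp only [Function.update_of_ne huv, hl'u u huv]
          refine ⟨hzu.1, le_trans hzu.2 ?_⟩
          gcongr
          by_cases hI : u ∈ I
          · simp [hI, Finset.mem_insert, huv]
          · simp [hI, Finset.mem_insert, huv]
      -- hypotheses
      have h1' : ∀ u, y u ≤ z' u := by
        intro u
        by_cases huv : u = v
        · subst huv; rw [hz'def]; simp [Function.update_self]
        · rw [hz'def]; simp [Function.update_of_ne huv]; exact h1 u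
      have h2' : ∀ u, z' u ≤ (c u : ℝ) → y u = z' u := by
        intro u hu
        by_cases huv : u = v
        · subst huv
          refine le_antisymm (h1' u) ?_
          calc z' u ≤ (c u : ℝ) := hu
            _ ≤ y u := hycv
        · rw [hz'def] at hu ⊢
          rw [Function.update_of_ne huv] at hu ⊢
          exact h2 u hu
      have h3' : ∀ u, (c u : ℝ) < z' u → (c u : ℝ) ≤ y u := by
        intro u hu
        by_cases huv : u = v
        · subst huv; exact hycv
        · rw [hz'def, Function.update_of_ne huv] at hu
          exact h3 u hu
      exact ih l' (insert v I) z' y hsum' hl'0 hW' hz' h1' h2' h3'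
    · push_neg at hex
      exact retract_base s w c n l I z y hl hW hz h1 h2 h3 hex

/-- if the weight function does not increase when decreasing a
coordinate which exceeds `c`, then `S_n` deformation retracts onto
`S_n ∩ [0,c]`; in particular the inclusion is a homotopy equivalence (hence
induces isomorphisms on all cohomology groups). -/
theorem Slevel_retract_to_box (s : ℕ) (w : (Fin s → ℤ) → ℤ)
    (hfin : ∀ n : ℤ, {l : Fin s → ℤ | w l ≤ n}.Finite)
    (c : Fin s → ℤ) (hc : 0 ≤ c)
    (hmono : ∀ (l : Fin s → ℤ) (v : Fin s), 0 ≤ l → c v < l v →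
      w (l - Pi.single v 1) ≤ w l) :
    ∀ n : ℤ, ∃ e : ContinuousMap.HomotopyEquiv
        ↥(SlevelPos s w n ∩ box s c) ↥(SlevelPos s w n),
      ∀ x : ↥(SlevelPos s w n ∩ box s c), (e.toFun x : Fin s → ℝ) = (x : Fin s → ℝ) := by
  intro n
  have key' : ∀ z ∈ SlevelPos s w n, ∀ y : Fin s → ℝ,
      (∀ v, y v ≤ z v) → (∀ v, z v ≤ (c v : ℝ) → y v = z v) →
      (∀ v, (c v : ℝ) < z v → (c v : ℝ) ≤ y v) → y ∈ SlevelPos s w n := by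
    intro z hz y h1 h2 h3
    rw [mem_SlevelPos_iff] at hz
    obtain ⟨l, hl, I, hW, hzc⟩ := hz
    exact retract_key s w c hc hmono n (∑ v, (l v - c v).toNat) l I z y le_rfl hl hW hzc
      h1 h2 h3
  have hnn : ∀ z ∈ SlevelPos s w n, ∀ v, (0 : ℝ) ≤ z v := by
    intro z hz v
    rw [mem_SlevelPos_iff] at hz
    obtain ⟨l, hl, I, hW, hzc⟩ := hz
    have h0 : (0:ℤ) ≤ l v := hl v
    have : (0:ℝ) ≤ (l v : ℝ) := by exact_mod_cast h0
    linarith [(hzc v).1]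
  -- inclusion
  set A := SlevelPos s w n ∩ box s c with hA
  let incl : C(↥A, ↥(SlevelPos s w n)) :=
    ⟨fun a => ⟨a.1, a.2.1⟩, Continuous.subtype_mk continuous_subtype_val _⟩
  -- retraction
  have hretmem : ∀ z : ↥(SlevelPos s w n), (fun v => min (z.1 v) ((c v : ℝ))) ∈ A := by
    intro z
    constructor
    · refine key' z.1 z.2 _ (fun v => min_le_left _ _) ?_ ?_
      · intro v hv; exact min_eq_left hv
      · intro v hv; exact le_min (le_of_lt hv) le_rfl
    · intro v
      refine ⟨le_min (hnn z.1 z.2 v) ?_, min_le_right _ _⟩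
      · exact_mod_cast hc v
  let ret : C(↥(SlevelPos s w n), ↥A) :=
    ⟨fun z => ⟨fun v => min (z.1 v) ((c v : ℝ)), hretmem z⟩, by
      refine Continuous.subtype_mk (continuous_pi fun v => Continuous.min ?_ continuous_const) _
      exact (continuous_apply v).comp continuous_subtype_val⟩
  have hleft : ret.comp incl = ContinuousMap.id ↥A := by
    ext a v
    simp only [ContinuousMap.comp_apply, ContinuousMap.id_apply, ret, incl]
    exact min_eq_left (a.2.2 v).2
  -- homotopy from incl ∘ ret to id
  have Fmem : ∀ (p : ↥unitInterval × ↥(SlevelPos s w n)),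
      (fun v => min (p.2.1 v) (p.1.1 * p.2.1 v + (1 - p.1.1) * (c v : ℝ)))
        ∈ SlevelPos s w n := by
    rintro ⟨t, z⟩
    refine key' z.1 z.2 _ (fun v => min_le_left _ _) ?_ ?_
    · intro v hv
      refine min_eq_left ?_
      nlinarith [t.2.1, t.2.2]
    · intro v hv
      refine le_min (le_of_lt hv) ?_
      nlinarith [t.2.1, t.2.2]
  let F : ContinuousMap.Homotopy (incl.comp ret) (ContinuousMap.id ↥(SlevelPos s w n)) :=
    { toFun := fun p =>
        ⟨fun v => min (p.2.1 v) (p.1.1 * p.2.1 v + (1 - p.1.1) * (c v : ℝ)), Fmem p⟩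
      continuous_toFun := by
        refine Continuous.subtype_mk (continuous_pi fun v => Continuous.min ?_ ?_) _
        · exact (continuous_apply v).comp (continuous_subtype_val.comp continuous_snd)
        · have ht : Continuous fun p : ↥unitInterval × ↥(SlevelPos s w n) => (p.1.1 : ℝ) :=
            continuous_subtype_val.comp continuous_fst
          have hz : Continuous fun p : ↥unitInterval × ↥(SlevelPos s w n) => p.2.1 v :=
            (continuous_apply v).comp (continuous_subtype_val.comp continuous_snd)
          exact (ht.mul hz).add (((continuous_const.sub ht)).mul continuous_const)
      map_zero_left := by
        intro z
        apply Subtype.ext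
        funext v
        show min (z.1 v) (0 * z.1 v + (1 - 0) * (c v : ℝ)) = min (z.1 v) ((c v : ℝ))
        norm_num
      map_one_left := by
        intro z
        apply Subtype.ext
        funext v
        show min (z.1 v) (1 * z.1 v + (1 - 1) * (c v : ℝ)) = z.1 v
        rw [one_mul]
        norm_num }
  refine ⟨⟨incl, ret, ?_, ⟨F⟩⟩, fun x => rfl⟩
  rw [hleft]
end

section
/- Let g: ℤ^s_{≥0} → ℤ be increasing, satisfying the opposite matroid rank inequality, with stabilized value G attained at a unique minimal element Z. Then for every l ≥ 0 one has g(l) = g(min(l, Z)) (coordinatewise min). -/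
lemma cohomology_mono_aux (s : ℕ) (g : (Fin s → ℤ) → ℤ)
    (hmono : ∀ (l : Fin s → ℤ) (v : Fin s), 0 ≤ l → g l ≤ g (l + Pi.single v 1)) :
    ∀ (n : ℕ) (a b : Fin s → ℤ), 0 ≤ a → a ≤ b →
      (∑ i, (b i - a i)).toNat = n → g a ≤ g b := by
  intro n
  induction n with
  | zero =>
    intro a b ha hab hsum
    have hsum' : (∑ i, (b i - a i)) = 0 := by
      have hnn : 0 ≤ ∑ i, (b i - a i) :=
        Finset.sum_nonneg fun i _ => by linarith [hab i]
      omega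
    have : a = b := by
      funext i
      have h0 : ∀ i ∈ Finset.univ, (0:ℤ) ≤ b i - a i := fun i _ => by linarith [hab i]
      have := (Finset.sum_eq_zero_iff_of_nonneg h0).mp hsum' i (Finset.mem_univ i)
      linarith
    rw [this]
  | succ n ih =>
    intro a b ha hab hsum
    have hne : a ≠ b := by
      intro h
      rw [h] at hsum
      simp at hsum
    obtain ⟨v, hv⟩ : ∃ v, a v < b v := by
      by_contra h
      push_neg at h
      exact hne (funext fun i => le_antisymm (hab i) (h i))
    set a' := a + Pi.single v 1 with ha'def
    have ha' : 0 ≤ a' := by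
      intro i
      by_cases h : i = v
      · subst h
        have h0 : (0:ℤ) ≤ a i := ha i
        simp [ha'def, Pi.single_apply]
        linarith
      · have h0 : (0:ℤ) ≤ a i := ha i
        simp [ha'def, Pi.single_apply, h]
        linarith
    have ha'b : a' ≤ b := by
      intro i
      by_cases h : i = v
      · subst h; simp [ha'def, Pi.single_apply]; linarith
      · have h0 := hab i
        simp [ha'def, Pi.single_apply, h]
        linarith
    have hsum' : (∑ i, (b i - a' i)).toNat = n := by
      have hpt : ∀ i, b i - a' i = (b i - a i) - (Pi.single v 1 : Fin s → ℤ) i := by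
        intro i; simp [ha'def]; ring
      have hs : ∑ i, (b i - a' i) = (∑ i, (b i - a i)) - 1 := by
        calc ∑ i, (b i - a' i) = ∑ i, ((b i - a i) - (Pi.single v 1 : Fin s → ℤ) i) := by
              simp [hpt]
          _ = (∑ i, (b i - a i)) - ∑ i, (Pi.single v 1 : Fin s → ℤ) i := Finset.sum_sub_distrib _ _
          _ = (∑ i, (b i - a i)) - 1 := by rw [Finset.sum_pi_single']; simp
      have hnn : 0 ≤ ∑ i, (b i - a' i) :=
        Finset.sum_nonneg fun i _ => by linarith [ha'b i]
      omega
    exact le_trans (hmono a v ha) (ih a' b ha' ha'b hsum')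

/-- with the cohomology cycle `Z` (the least element where the
stabilized value `G` is attained), one has `g(l) = g(min(l, Z))` for all
`l ≥ 0`. -/
theorem cohomology_cycle_min (s : ℕ) (g : (Fin s → ℤ) → ℤ)
    (hmono : ∀ (l : Fin s → ℤ) (v : Fin s), 0 ≤ l → g l ≤ g (l + Pi.single v 1))
    (hopp : ∀ l₁ l₂ : Fin s → ℤ, 0 ≤ l₁ → 0 ≤ l₂ →
      g l₁ + g l₂ ≤ g (l₁ ⊓ l₂) + g (l₁ ⊔ l₂))
    (G : ℤ) (hG : IsGreatest (g '' {l : Fin s → ℤ | 0 ≤ l}) G)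
    (Z : Fin s → ℤ) (hZ : IsLeast {l : Fin s → ℤ | 0 ≤ l ∧ g l = G} Z)
    (hZlt : ∀ l : Fin s → ℤ, 0 ≤ l → ¬ Z ≤ l → g l < G) :
    ∀ l : Fin s → ℤ, 0 ≤ l → g l = g (l ⊓ Z) := by
  intro l hl
  obtain ⟨⟨hZ0, hgZ⟩, _⟩ := hZ
  have hinf0 : (0:Fin s → ℤ) ≤ l ⊓ Z := le_inf hl hZ0
  have hsup0 : (0:Fin s → ℤ) ≤ l ⊔ Z := le_trans hl le_sup_left
  have h1 : g (l ⊓ Z) ≤ g l :=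
    cohomology_mono_aux s g hmono _ (l ⊓ Z) l hinf0 inf_le_left rfl
  have h2 : g (l ⊔ Z) ≤ G := hG.2 ⟨l ⊔ Z, hsup0, rfl⟩
  have h3 := hopp l Z hl hZ0
  linarith
end

section
/- Let h be increasing with h(0)=0 and satisfy CDP with h° = h^sym on R = [0,c], i.e., h(l+E_v) − h(l) and h(c−l) − h(c−l−E_v) are never both positive. Let w₀(l) = h(l) + h(c−l) − h(c). Then w₀(c) = w₀(0) = 0, the function w₀ is symmetric: w₀(c − l) = w₀(l) for all l ∈ R, and for any increasing path from 0 to c, eu(H⁰(γ,w)) = h(c). -/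
/-- for the symmetric weight `w₀(l) = h(l) + h(c−l) − h(c)`
coming from a CDP pair `(h, h^sym)`, one has `w₀(0) = w₀(c) = 0`, `w₀` is
symmetric, and every increasing path from `0` to `c` has Euler characteristic
`h(c)`. -/
theorem symmetric_CDP_eu (s : ℕ) (c : Fin s → ℤ) (hc : 0 ≤ c)
    (h : (Fin s → ℤ) → ℤ)
    (hzero : h 0 = 0)
    (hmono : ∀ (l : Fin s → ℤ) (v : Fin s), 0 ≤ l → l + Pi.single v 1 ≤ c →
      h l ≤ h (l + Pi.single v 1))
    (hCDP : ∀ (l : Fin s → ℤ) (v : Fin s), 0 ≤ l → l + Pi.single v 1 ≤ c →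
      ¬(h l < h (l + Pi.single v 1)
          ∧ h (c - l - Pi.single v 1) < h (c - l)))
    (w : (Fin s → ℤ) → ℤ)
    (hw : ∀ l, w l = h l + h (c - l) - h c) :
    w c = 0 ∧ w 0 = 0
    ∧ (∀ l : Fin s → ℤ, 0 ≤ l → l ≤ c → w (c - l) = w l)
    ∧ (∀ (t : ℕ) (x : ℕ → Fin s → ℤ) (v : ℕ → Fin s),
        x 0 = 0 → x t = c →
        (∀ i < t, x (i + 1) = x i + Pi.single (v i) 1) →
        -(w (x 0)) + ∑ i ∈ Finset.range t, max 0 (w (x i) - w (x (i + 1)))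
          = h c) := by

  have hw0 : w 0 = 0 := by rw [hw]; simp [hzero]
  have hwc : w c = 0 := by rw [hw]; simp [hzero]
  refine ⟨hwc, hw0, ?_, ?_⟩
  · intro l _ _
    rw [hw, hw, sub_sub_cancel]; ring
  · intro t x v hx0 hxt hstep
    have hup : ∀ i < t, x i ≤ x (i + 1) := by
      intro i hi
      rw [hstep i hi]
      have hs : (0 : Fin s → ℤ) ≤ Pi.single (v i) 1 := by
        intro j
        classical
        simp only [Pi.zero_apply, Pi.single_apply]
        split <;> omega
      exact le_add_of_nonneg_right hs
    have hchain : ∀ j ≤ t, ∀ i ≤ j, x i ≤ x j := by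
      intro j
      induction j with
      | zero => intro _ i hi; simp [Nat.le_zero.mp hi]
      | succ n ih =>
        intro hj i hi
        rcases Nat.lt_or_ge i (n + 1) with h' | h'
        · calc x i ≤ x n := ih (by omega) i (by omega)
            _ ≤ x (n + 1) := hup n (by omega)
        · have : i = n + 1 := by omega
          simp [this]
    have hnn : ∀ i ≤ t, 0 ≤ x i := fun i hi => hx0 ▸ hchain i hi 0 (Nat.zero_le _)
    have hle : ∀ i ≤ t, x i ≤ c := fun i hi => hxt ▸ hchain t le_rfl i hi
    have hterm : ∀ i ∈ Finset.range t,
        max 0 (w (x i) - w (x (i + 1))) = h (c - x i) - h (c - x (i + 1)) := by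
      intro i hi
      rw [Finset.mem_range] at hi
      have h1 : 0 ≤ x i := hnn i (by omega)
      have h2 : x (i + 1) ≤ c := hle (i + 1) (by omega)
      have hxe := hstep i hi
      have hA : h (x i) ≤ h (x (i + 1)) := by
        rw [hxe]; exact hmono _ _ h1 (hxe ▸ h2)
      have hsub : c - x (i + 1) = c - x i - Pi.single (v i) 1 := by
        rw [hxe]; ring
      have hB : h (c - x (i + 1)) ≤ h (c - x i) := by
        have hnn2 : 0 ≤ c - x (i + 1) := sub_nonneg.mpr h2
        have hadd : c - x (i + 1) + Pi.single (v i) 1 = c - x i := by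
          rw [hxe]; ring
        have := hmono (c - x (i + 1)) (v i) hnn2
          (by rw [hadd]; exact sub_le_self _ h1)
        rwa [hadd] at this
      have hC := hCDP (x i) (v i) h1 (hxe ▸ h2)
      rw [← hxe, ← hsub] at hC
      rw [hw, hw, max_def]
      split_ifs <;> omega
    rw [Finset.sum_congr rfl hterm, Finset.sum_range_sub' (fun i => h (c - x i)),
      hx0, hxt, hw0, sub_self, sub_zero, hzero, sub_zero, neg_zero, zero_add]
end
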